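/- arXiv:2405.12968 — 4 statements merged into one kernel-verified Lean document; each statement's English description precedes it below -/
import Mathlib

section
/- Fix $r \geq 1$ and let $Q_r$ be the poset $\{0, \ell_1, \dots, \ell_r, V\}$ with $0 < \ell_i < V$ for all $i$ and the $\ell_i$ pairwise incomparable. Let $J \in (1/2, 1]$. Define for a monotone function $g: \{0, \ell_1, \dots, \ell_r\} \to \mathbb{N}$ (i.e. $g(0) \le g(\ell_i)$ for all $i$) the quantity $E(g) = m_0(\mathrm{sat}(g)) + J \cdot \sum_{i=1}^r m_{\ell_i}(\mathrm{sat}(g))$, where $\mathrm{sat}(g)$ is the smallest meet-preserving function above $g$, $m_0$ is the value at $0$, and $m_{\ell_i}(g) = g(\ell_i) - g(0)$. Then $E$ is superadditive: for all such $g_1, g_2$, $E(g_1 + g_2) \leq E(g_1) + E(g_2)$. -/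
open Finset

/-- The saturated value at `0` of a monotone function on `tilde Q_r`, given by
`max(g(0), max_{i ≠ j} min(g(ℓ_i), g(ℓ_j)))`. -/
def sat0 {r : ℕ} (g0 : ℕ) (g : Fin r → ℕ) : ℕ :=
  max g0 ((Finset.univ.filter fun p : Fin r × Fin r => p.1 ≠ p.2).sup
    fun p => min (g p.1) (g p.2))

/-- `E(g) = m₀(sat g) + J · Σᵢ m_{ℓᵢ}(sat g)`, where after saturation
`m₀ = sat0 g0 g` and `m_{ℓᵢ} = max (g i) (sat0 g0 g) - sat0 g0 g`. -/
noncomputable def Efun {r : ℕ} (J : ℝ) (g0 : ℕ) (g : Fin r → ℕ) : ℝ :=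
  (sat0 g0 g : ℝ) + J * ∑ i : Fin r, ((max (g i) (sat0 g0 g) - sat0 g0 g : ℕ) : ℝ)

lemma min_le_sat0 {r : ℕ} (g0 : ℕ) (g : Fin r → ℕ) {i j : Fin r} (hij : i ≠ j) :
    min (g i) (g j) ≤ sat0 g0 g :=
  le_max_of_le_right (Finset.le_sup (f := fun p : Fin r × Fin r => min (g p.1) (g p.2))
    (by simp [Finset.mem_filter, hij] : (i, j) ∈ _))

lemma sat0_le_sup {r : ℕ} (hr : 1 ≤ r) (g0 : ℕ) (g : Fin r → ℕ) (hg : ∀ i, g0 ≤ g i) :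
    sat0 g0 g ≤ univ.sup g := by
  have i0 : Fin r := ⟨0, hr⟩
  apply max_le
  · exact (hg i0).trans (Finset.le_sup (mem_univ i0))
  · exact Finset.sup_le fun p _ => (min_le_left _ _).trans (Finset.le_sup (mem_univ p.1))

lemma at_most_one {r : ℕ} (g0 : ℕ) (g : Fin r → ℕ) {i j : Fin r} (hij : i ≠ j)
    (hi : sat0 g0 g < g i) : g j ≤ sat0 g0 g := by
  by_contra hj
  push_neg at hj
  have := min_le_sat0 g0 g hij
  omega

lemma sum_sat {r : ℕ} (hr : 1 ≤ r) (g0 : ℕ) (g : Fin r → ℕ) (hg : ∀ i, g0 ≤ g i) :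
    ∑ i : Fin r, (max (g i) (sat0 g0 g) - sat0 g0 g) = univ.sup g - sat0 g0 g := by
  set s := sat0 g0 g with hs
  by_cases hex : ∃ i, s < g i
  · obtain ⟨i0, hi0⟩ := hex
    have hsum : ∑ i : Fin r, (max (g i) s - s) = max (g i0) s - s := by
      apply Finset.sum_eq_single
      · intro j _ hj
        have := at_most_one g0 g (Ne.symm hj) hi0
        omega
      · intro hmem; exact absurd (mem_univ i0) hmem
    have hsup : univ.sup g = g i0 := by
      apply le_antisymm
      · apply Finset.sup_le
        intro j _
        rcases eq_or_ne j i0 with rfl | hj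
        · exact le_rfl
        · have := at_most_one g0 g (Ne.symm hj) hi0; omega
      · exact Finset.le_sup (mem_univ i0)
    rw [hsum, hsup]; omega
  · push_neg at hex
    have h1 : ∀ i : Fin r, max (g i) s - s = 0 := fun i => by have := hex i; omega
    have h2 : univ.sup g ≤ s := Finset.sup_le fun i _ => hex i
    simp [h1]
    omega

lemma Efun_eq {r : ℕ} (hr : 1 ≤ r) (J : ℝ) (g0 : ℕ) (g : Fin r → ℕ) (hg : ∀ i, g0 ≤ g i) :
    Efun J g0 g = (1 - J) * (sat0 g0 g : ℝ) + J * ((univ.sup g : ℕ) : ℝ) := by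
  unfold Efun
  rw [← Nat.cast_sum, sum_sat hr g0 g hg, Nat.cast_sub (sat0_le_sup hr g0 g hg)]
  ring

/-- The key real-arithmetic case analysis. Here `a = g m`, `b = g k`, `c = h m`, `d = h k`
with `m ≠ k`, `S = a + c` the saturated value of the sum and `M = b + d` its max. -/
lemma key_real (J a b c d sg sh Mg Mh : ℝ)
    (hJ1 : 1 / 2 < J) (hJ2 : J ≤ 1)
    (h1 : min a b ≤ sg) (h2 : min c d ≤ sh)
    (ha : a ≤ Mg) (hb : b ≤ Mg) (hc : c ≤ Mh) (hd : d ≤ Mh)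
    (hsg : sg ≤ Mg) (hsh : sh ≤ Mh)
    (hSM : a + c ≤ b + d) :
    (1 - J) * (a + c) + J * (b + d) ≤ (1 - J) * (sg + sh) + J * (Mg + Mh) := by
  rcases le_total a b with hab | hab <;> rcases le_total c d with hcd | hcd
  · rw [min_eq_left hab] at h1; rw [min_eq_left hcd] at h2
    nlinarith [mul_nonneg (by linarith : (0:ℝ) ≤ 1 - J) (by linarith : (0:ℝ) ≤ sg - a),
      mul_nonneg (by linarith : (0:ℝ) ≤ 1 - J) (by linarith : (0:ℝ) ≤ sh - c),
      mul_nonneg (by linarith : (0:ℝ) ≤ J) (by linarith : (0:ℝ) ≤ Mg - b),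
      mul_nonneg (by linarith : (0:ℝ) ≤ J) (by linarith : (0:ℝ) ≤ Mh - d)]
  · rw [min_eq_left hab] at h1; rw [min_eq_right hcd] at h2
    nlinarith [mul_nonneg (by linarith : (0:ℝ) ≤ 1 - J) (by linarith : (0:ℝ) ≤ sg - a),
      mul_nonneg (by linarith : (0:ℝ) ≤ J) (by linarith : (0:ℝ) ≤ Mg - b),
      mul_nonneg (by linarith : (0:ℝ) ≤ 1 - J) (by linarith : (0:ℝ) ≤ Mh - c),
      mul_nonneg (by linarith : (0:ℝ) ≤ J) (by linarith : (0:ℝ) ≤ sh - d),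
      mul_nonneg (by linarith : (0:ℝ) ≤ 2 * J - 1) (by linarith : (0:ℝ) ≤ Mh - sh)]
  · rw [min_eq_right hab] at h1; rw [min_eq_left hcd] at h2
    nlinarith [mul_nonneg (by linarith : (0:ℝ) ≤ 1 - J) (by linarith : (0:ℝ) ≤ sh - c),
      mul_nonneg (by linarith : (0:ℝ) ≤ J) (by linarith : (0:ℝ) ≤ Mh - d),
      mul_nonneg (by linarith : (0:ℝ) ≤ 1 - J) (by linarith : (0:ℝ) ≤ Mg - a),
      mul_nonneg (by linarith : (0:ℝ) ≤ J) (by linarith : (0:ℝ) ≤ sg - b),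
      mul_nonneg (by linarith : (0:ℝ) ≤ 2 * J - 1) (by linarith : (0:ℝ) ≤ Mg - sg)]
  · -- b ≤ a, d ≤ c : then a + c = b + d
    rw [min_eq_right hab] at h1; rw [min_eq_right hcd] at h2
    have heq : a + c = b + d := le_antisymm hSM (by linarith)
    nlinarith [mul_nonneg (by linarith : (0:ℝ) ≤ J) (by linarith : (0:ℝ) ≤ Mg - sg),
      mul_nonneg (by linarith : (0:ℝ) ≤ J) (by linarith : (0:ℝ) ≤ Mh - sh)]

/-- Subadditivity of `E` for `J ∈ (1/2, 1]`: for monotone functions `g₁, g₂` on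
`tilde Q_r` (i.e. `g(0) ≤ g(ℓᵢ)` for all `i`), one has `E(g₁ + g₂) ≤ E(g₁) + E(g₂)`. -/
theorem stmt3 (r : ℕ) (hr : 1 ≤ r) (J : ℝ) (hJ1 : 1 / 2 < J) (hJ2 : J ≤ 1)
    (g0 h0 : ℕ) (g h : Fin r → ℕ)
    (hg : ∀ i, g0 ≤ g i) (hh : ∀ i, h0 ≤ h i) :
    Efun J (g0 + h0) (fun i => g i + h i) ≤ Efun J g0 g + Efun J h0 h := by
  have hJ0 : (0:ℝ) ≤ J := by linarith
  have hJ1' : (0:ℝ) ≤ 1 - J := by linarith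
  set gh : Fin r → ℕ := fun i => g i + h i with hgh_def
  have hgh : ∀ i, g0 + h0 ≤ gh i := fun i => add_le_add (hg i) (hh i)
  rw [Efun_eq hr J g0 g hg, Efun_eq hr J h0 h hh, Efun_eq hr J (g0 + h0) gh hgh]
  set sg := sat0 g0 g with hsg_def
  set sh := sat0 h0 h with hsh_def
  set S := sat0 (g0 + h0) gh with hS_def
  set Mg := univ.sup g with hMg_def
  set Mh := univ.sup h with hMh_def
  set M := univ.sup gh with hM_def
  have hg0sg : g0 ≤ sg := le_max_left _ _
  have hh0sh : h0 ≤ sh := le_max_left _ _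
  have hsgMg : sg ≤ Mg := sat0_le_sup hr g0 g hg
  have hshMh : sh ≤ Mh := sat0_le_sup hr h0 h hh
  have hSM : S ≤ M := sat0_le_sup hr (g0 + h0) gh hgh
  have hgMg : ∀ i, g i ≤ Mg := fun i => Finset.le_sup (mem_univ i)
  have hhMh : ∀ i, h i ≤ Mh := fun i => Finset.le_sup (mem_univ i)
  have hMMgMh : M ≤ Mg + Mh := Finset.sup_le fun i _ => add_le_add (hgMg i) (hhMh i)
  -- the max of the sum is attained at some k
  have : Nonempty (Fin r) := ⟨⟨0, hr⟩⟩
  obtain ⟨k, -, hk⟩ := Finset.exists_mem_eq_sup univ univ_nonempty gh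
  -- case analysis on the saturated value S of the sum
  rcases le_or_gt ((Finset.univ.filter fun p : Fin r × Fin r => p.1 ≠ p.2).sup
      fun p => min (gh p.1) (gh p.2)) (g0 + h0) with hP | hP
  · -- S = g0 + h0 ≤ sg + sh : easy case
    have hSval : S = g0 + h0 := max_eq_left hP
    have hS' : S ≤ sg + sh := by omega
    have c1 : (S:ℝ) ≤ (sg:ℝ) + (sh:ℝ) := by exact_mod_cast hS'
    have c2 : (M:ℝ) ≤ (Mg:ℝ) + (Mh:ℝ) := by exact_mod_cast hMMgMh
    nlinarith [mul_nonneg hJ1' (by linarith : (0:ℝ) ≤ (sg:ℝ) + sh - S),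
      mul_nonneg hJ0 (by linarith : (0:ℝ) ≤ (Mg:ℝ) + Mh - M)]
  · -- S is the second max of the sum, attained at a pair (i, j)
    have hSval : S = (Finset.univ.filter fun p : Fin r × Fin r => p.1 ≠ p.2).sup
        fun p => min (gh p.1) (gh p.2) := max_eq_right hP.le
    have hne : ((Finset.univ.filter fun p : Fin r × Fin r => p.1 ≠ p.2)).Nonempty := by
      by_contra hemp
      rw [Finset.not_nonempty_iff_eq_empty] at hemp
      rw [hemp, Finset.sup_empty] at hP
      rw [Nat.bot_eq_zero] at hP
      omega
    obtain ⟨p, hpmem, hp⟩ := Finset.exists_mem_eq_sup _ hne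
      (fun p : Fin r × Fin r => min (gh p.1) (gh p.2))
    have hij : p.1 ≠ p.2 := (Finset.mem_filter.mp hpmem).2
    set i := p.1
    set j := p.2
    have hSij : S = min (gh i) (gh j) := by rw [hSval, hp]
    have hAi : gh i ≤ M := Finset.le_sup (mem_univ i)
    have hAj : gh j ≤ M := Finset.le_sup (mem_univ j)
    -- find m ≠ k with S = gh m
    obtain ⟨m, hmk, hSm⟩ : ∃ m, m ≠ k ∧ S = gh m := by
      rcases eq_or_ne i k with hik | hik
      · have hjk : j ≠ k := fun hjk => hij (hik.trans hjk.symm)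
        have hle : gh j ≤ gh i := by rw [hik]; exact hAj.trans hk.le
        exact ⟨j, hjk, by rw [hSij, min_eq_right hle]⟩
      · rcases eq_or_ne j k with hjk | hjk
        · have hle : gh i ≤ gh j := by rw [hjk]; exact hAi.trans hk.le
          exact ⟨i, hik, by rw [hSij, min_eq_left hle]⟩
        · rcases le_total (gh i) (gh j) with hle | hle
          · exact ⟨i, hik, by rw [hSij, min_eq_left hle]⟩
          · exact ⟨j, hjk, by rw [hSij, min_eq_right hle]⟩
    have hM' : M = gh k := hk
    have hminS : min (g m) (g k) ≤ sg := min_le_sat0 g0 g hmk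
    have hminS' : min (h m) (h k) ≤ sh := min_le_sat0 h0 h hmk
    have hghm : gh m = g m + h m := rfl
    have hghk : gh k = g k + h k := rfl
    have key := key_real J (g m) (g k) (h m) (h k) sg sh Mg Mh hJ1 hJ2
      (by exact_mod_cast hminS) (by exact_mod_cast hminS')
      (by exact_mod_cast hgMg m) (by exact_mod_cast hgMg k)
      (by exact_mod_cast hhMh m) (by exact_mod_cast hhMh k)
      (by exact_mod_cast hsgMg) (by exact_mod_cast hshMh)
      (by
        have : gh m ≤ gh k := by rw [← hSm, ← hM']; exact hSM
        rw [hghm, hghk] at this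
        exact_mod_cast this)
    have e1 : (S:ℝ) = (g m : ℝ) + (h m : ℝ) := by rw [hSm, hghm]; push_cast; ring
    have e2 : (M:ℝ) = (g k : ℝ) + (h k : ℝ) := by rw [hM', hghk]; push_cast; ring
    rw [e1, e2]
    linarith [key]
end

section
/- Let $B$ be a Banach space, $F$ a finite dimensional normed vector space, $X$ a topological space, $s: X \to \mathrm{Emb}(F, B)$ a continuous family of linear embeddings (with the operator norm topology), and $x_0 \in X$. Then there is a neighborhood $U$ of $x_0$ and a continuous map $t: U \to \mathrm{Aut}(B)$ into the continuous linear automorphisms of $B$ such that $t(x) \circ s(x) = s(x_0)$ for all $x \in U$. -/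
open scoped Topology
open Function

/-!
Hahn–Banach gives a continuous left inverse `p` of `s x₀`. For `x` near `x₀` the endomorphism
`p ∘ s x` of the finite-dimensional space `F` is close to the identity, hence invertible with
inverse `r x` depending continuously on `x`. Then `id + (s x₀ - s x) ∘ r x ∘ p` is an
automorphism of `B`, with inverse `id - (s x₀ - s x) ∘ p`, sending `s x` to `s x₀`.
-/

theorem ContinuousLinearMap.hasLeftInverse_of_injective_of_finiteDimensional_domain
    {𝕜 E F : Type*} [RCLike 𝕜]
    [NormedAddCommGroup E] [NormedSpace 𝕜 E] [FiniteDimensional 𝕜 E]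
    [NormedAddCommGroup F] [NormedSpace 𝕜 F]
    (f : E →L[𝕜] F) (hf : Injective f) : f.HasLeftInverse := by
  let e := LinearEquiv.ofInjective f.toLinearMap hf
  obtain ⟨g, hg⟩ :=
    (LinearMap.toContinuousLinearMap e.symm.toLinearMap).exist_extension_of_finiteDimensional_range
  exact ⟨g, fun x => (congr($hg ⟨f x, x, rfl⟩)).symm.trans (e.symm_apply_apply x)⟩

theorem NormedRing.continuousOn_inverse {R : Type*} [NormedRing R] [HasSummableGeomSeries R] :
    ContinuousOn Ring.inverse {x : R | IsUnit x} :=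
  fun _ ⟨u, hu⟩ => hu ▸ (NormedRing.inverse_continuousAt u).continuousWithinAt

section AlignEmbedding

variable {R B F : Type*} [Ring R]
  [TopologicalSpace B] [AddCommGroup B] [Module R B] [IsTopologicalAddGroup B]
  [TopologicalSpace F] [AddCommGroup F] [Module R F]

def alignEmbedding (f₀ f : F →L[R] B) (p : B →L[R] F) (r : F →L[R] F)
    (hp : LeftInverse p f₀) (hrl : LeftInverse r (p.comp f)) (hrr : RightInverse r (p.comp f)) :
    B ≃L[R] B :=
  have hpf : ∀ v, p ((f₀ - f) v) = v - p (f v) := fun v => by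
    rw [sub_apply, map_sub, hp]
  .equivOfInverse (.id R B + (f₀ - f).comp (r.comp p)) (.id R B - (f₀ - f).comp p)
    (fun b => by
      have : p (b + (f₀ - f) (r (p b))) = r (p b) := by
        rw [map_add, hpf, ← p.comp_apply f, hrr]; abel
      change b + (f₀ - f) (r (p b)) - (f₀ - f) (p (b + (f₀ - f) (r (p b)))) = b
      rw [this]; abel)
    (fun b => by
      have : p (b - (f₀ - f) (p b)) = p.comp f (p b) := by
        rw [map_sub, hpf, p.comp_apply]; abel
      change b - (f₀ - f) (p b) + (f₀ - f) (r (p (b - (f₀ - f) (p b)))) = b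
      rw [this, hrl]; abel)

variable {f₀ f : F →L[R] B} {p : B →L[R] F} {r : F →L[R] F}
  (hp : LeftInverse p f₀) (hrl : LeftInverse r (p.comp f)) (hrr : RightInverse r (p.comp f))

theorem coe_alignEmbedding :
    (alignEmbedding f₀ f p r hp hrl hrr : B →L[R] B) = .id R B + (f₀ - f).comp (r.comp p) :=
  rfl

theorem alignEmbedding_comp :
    (alignEmbedding f₀ f p r hp hrl hrr : B →L[R] B).comp f = f₀ := by
  ext v
  change f v + (f₀ - f) (r (p.comp f v)) = f₀ v
  rw [hrl, sub_apply]
  abel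

end AlignEmbedding

theorem stmt5_general {B F X : Type*}
    [NormedAddCommGroup B] [NormedSpace ℝ B]
    [NormedAddCommGroup F] [NormedSpace ℝ F] [FiniteDimensional ℝ F]
    [TopologicalSpace X]
    (s : X → F →L[ℝ] B) (hs : Continuous s)
    (hinj : ∀ x, Function.Injective (s x)) (x0 : X) :
    ∃ U ∈ 𝓝 x0, ∃ t : X → B ≃L[ℝ] B,
      (Continuous fun x : U => (t (x : X) : B →L[ℝ] B)) ∧
      ∀ x ∈ U, (t x : B →L[ℝ] B).comp (s x) = s x0 := by
  obtain ⟨p, hp⟩ := (s x0).hasLeftInverse_of_injective_of_finiteDimensional_domain (hinj x0)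
  have hg : Continuous fun x => p.comp (s x) := hs.const_clm_comp p
  let U := {x | IsUnit (p.comp (s x))}
  have hx0 : x0 ∈ U := by
    rw [Set.mem_ofPred_eq, show p.comp (s x0) = 1 from ContinuousLinearMap.ext hp]
    exact isUnit_one
  classical
  let t x := if hx : x ∈ U then
      alignEmbedding (s x0) (s x) p (Ring.inverse (p.comp (s x))) hp
        (fun v => congr($(Ring.inverse_mul_cancel _ hx) v))
        (fun v => congr($(Ring.mul_inverse_cancel _ hx) v))
    else .refl ℝ B
  refine ⟨U, (Units.isOpen.preimage hg).mem_nhds hx0, t, ?_, fun x hx => ?_⟩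
  · have hr : ContinuousOn (fun x => Ring.inverse (p.comp (s x))) U :=
      NormedRing.continuousOn_inverse.comp hg.continuousOn fun _ hx => hx
    have ht : ContinuousOn
        (fun x => .id ℝ B + (s x0 - s x).comp ((Ring.inverse (p.comp (s x))).comp p)) U :=
      continuousOn_const.add <|
        (continuousOn_const.sub hs.continuousOn).clm_comp (hr.clm_comp continuousOn_const)
    refine (continuousOn_iff_continuous_domRestrict.1 ht).congr fun x => ?_
    simp only [t, dif_pos x.2, coe_alignEmbedding, Set.domRestrict_apply]
  · simp only [t, dif_pos hx]
    exact alignEmbedding_comp ..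

/-- Local trivialization of continuous families of finite-dimensional embeddings into
a Banach space: given a continuous family `s : X → (F →L[ℝ] B)` of injective linear maps
with `F` finite dimensional and `B` Banach, near any `x₀` there is a continuous family of
automorphisms `t x` of `B` with `t x ∘ s x = s x₀`. -/
theorem stmt5 {B F X : Type*}
    [NormedAddCommGroup B] [NormedSpace ℝ B] [CompleteSpace B]
    [NormedAddCommGroup F] [NormedSpace ℝ F] [FiniteDimensional ℝ F]
    [TopologicalSpace X]
    (s : X → F →L[ℝ] B) (hs : Continuous s)
    (hinj : ∀ x, Function.Injective (s x)) (x0 : X) :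
    ∃ U ∈ 𝓝 x0, ∃ t : X → B ≃L[ℝ] B,
      (Continuous fun x : U => (t (x : X) : B →L[ℝ] B)) ∧
      ∀ x ∈ U, (t x : B →L[ℝ] B).comp (s x) = s x0 :=
  stmt5_general s hs hinj x0
end

section
/- Let $\pi: \mathrm{Bl}_0 \mathbb{C}^v \to \mathbb{C}^v$ be the blowup of the origin, $U \subseteq \mathbb{C}$ open, and $w \in \mathrm{Sym}^m(U)$. Then postcomposition with $\pi$ defines a bijection between: (a) continuous maps $U \to \mathrm{Bl}_0 \mathbb{C}^v$ intersecting the exceptional divisor holomorphically to order exactly $w$, and (b) continuous maps $U \to \mathbb{C}^v$ intersecting the origin holomorphically to order exactly $w$. The inverse sends $(f_1, \dots, f_v)$ with $f_i = \rho_w \tilde{f}_i$ to $(f_1, \dots, f_v) \times [\tilde{f}_1 : \cdots : \tilde{f}_v]$. -/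
/-!
In the chart of the blowup where the `i`-th homogeneous coordinate is `1`, a map `F` with the
required vanishing reads `z ↦ (ρ(z) g(z), [g(z)])` with `g` continuous and nowhere zero. As `ρ`
has finitely many zeros and an open `U ⊆ ℂ` has no isolated points, a continuous `g` is
determined by `ρ g`; so the local `g` glue to a global `f̃` with `F = (ρ f̃, [f̃])`, and `F` is
determined by `π ∘ F = ρ f̃`. Conversely `z ↦ (f z, [f̃ z])` lifts a map `f = ρ f̃` of the base.
-/

open scoped LinearAlgebra.Projectivization

noncomputable section

instance projTop (v : ℕ) : TopologicalSpace (ℙ ℂ (Fin v → ℂ)) :=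
  inferInstanceAs (TopologicalSpace (Quotient (projectivizationSetoid ℂ (Fin v → ℂ))))

/-- The blowup of `ℂ^v` at the origin, as the incidence variety in
`ℂ^v × ℙ(ℂ^v)`. -/
def Blowup (v : ℕ) : Type :=
  {p : (Fin v → ℂ) × ℙ ℂ (Fin v → ℂ) // p.1 ∈ p.2.submodule}

instance (v : ℕ) : TopologicalSpace (Blowup v) := instTopologicalSpaceSubtype

/-- The exceptional divisor of the blowup. -/
def ExcDiv (v : ℕ) : Set (Blowup v) := {p | p.1.1 = 0}

variable (v : ℕ) (U : Set ℂ) (ρ : ℂ → ℂ) (R : Set ℂ)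

/-- A continuous map `f : U → ℂ^v` intersects the origin holomorphically to order
exactly `w`, where `w` has monic polynomial `ρ` and support `R`: each coordinate factors
continuously as `ρ · f̃ᵢ`, at each point of `R` some `f̃ᵢ` is nonzero, and
`f⁻¹(0) = R`. -/
def BaseExact (f : U → Fin v → ℂ) : Prop :=
  Continuous f ∧
    (∃ ft : U → Fin v → ℂ, Continuous ft ∧
      (∀ (z : U) (i : Fin v), f z i = ρ (z : ℂ) * ft z i) ∧
      ∀ z : U, (z : ℂ) ∈ R → ft z ≠ 0) ∧
    ∀ z : U, f z = 0 ↔ (z : ℂ) ∈ R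

/-- A continuous map `F : U → Bl₀ ℂ^v` intersects the exceptional divisor
holomorphically to order exactly `w`: `F⁻¹(E) = R`, and near every point there is a
standard chart (index `i` where the homogeneous coordinate is nonvanishing, witnessed by
a continuous local lift `ℓf` normalized by `ℓf z i = 1`) in which the chart coordinate
cutting out `E`, namely `z ↦ (F z).1 i`, factors as `ρ ·(unit)`. -/
def BlExact (F : U → Blowup v) : Prop :=
  Continuous F ∧ (∀ z : U, F z ∈ ExcDiv v ↔ (z : ℂ) ∈ R) ∧
    ∀ z0 : U, ∃ (i : Fin v) (V : Set U), IsOpen V ∧ z0 ∈ V ∧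
      (∃ ℓf : U → Fin v → ℂ, ContinuousOn ℓf V ∧ (∀ z ∈ V, ℓf z i = 1) ∧
        ∀ z ∈ V, ∃ hnz : ℓf z ≠ 0, (F z).1.2 = Projectivization.mk ℂ (ℓf z) hnz) ∧
      (∃ gl : U → ℂ, ContinuousOn gl V ∧
        (∀ z ∈ V, (F z).1.1 i = ρ (z : ℂ) * gl z) ∧
        ∀ z ∈ V, (z : ℂ) ∈ R → gl z ≠ 0)

open Filter Topology Set

theorem IsOpen.perfectSpace_subtype {α : Type*} [TopologicalSpace α] [PerfectSpace α]
    {U : Set α} (hU : IsOpen U) : PerfectSpace U := by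
  refine perfectSpace_iff_forall_not_isolated.mpr fun z => ?_
  rw [neBot_iff, Ne, ← isOpen_singleton_iff_punctured_nhds]
  intro hz
  have := hU.isOpenMap_subtype_val _ hz
  rw [image_singleton, isOpen_singleton_iff_punctured_nhds] at this
  exact (PerfectSpace.not_isolated (z : α)).ne this

theorem eqOn_of_smul_eqOn_of_finite_zeros {X K E : Type*} [TopologicalSpace X] [T1Space X]
    [PerfectSpace X] [Field K] [AddCommGroup E] [Module K E] [TopologicalSpace E] [T2Space E]
    {ρ : X → K} (hρ : {x | ρ x = 0}.Finite) {g₁ g₂ : X → E} {V : Set X} (hV : IsOpen V)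
    (hg₁ : ContinuousOn g₁ V) (hg₂ : ContinuousOn g₂ V)
    (h : ∀ x ∈ V, ρ x • g₁ x = ρ x • g₂ x) : EqOn g₁ g₂ V := by
  have hoff : EqOn g₁ g₂ (V ∩ {x | ρ x = 0}ᶜ) := fun x hx =>
    smul_right_injective E hx.2 (h x hx.1)
  have hdense : Dense {x | ρ x = 0}ᶜ := by
    simpa only [compl_eq_univ_sdiff] using dense_univ.sdiff_finite hρ
  exact hoff.of_subset_closure hg₁ hg₂ inter_subset_left (hdense.open_subset_closure_inter hV)

namespace Blowup

variable {v : ℕ}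

def ofFactor (a : ℂ) (ℓ : Fin v → ℂ) (hℓ : ℓ ≠ 0) : Blowup v :=
  ⟨(a • ℓ, Projectivization.mk ℂ ℓ hℓ), by
    rw [Projectivization.submodule_mk]
    exact Submodule.smul_mem _ a (Submodule.mem_span_singleton_self ℓ)⟩

@[simp]
theorem ofFactor_fst (a : ℂ) (ℓ : Fin v → ℂ) (hℓ : ℓ ≠ 0) : (ofFactor a ℓ hℓ).1.1 = a • ℓ :=
  rfl

theorem fst_eq_smul_of_snd_eq_mk (p : Blowup v) {ℓ : Fin v → ℂ} {hℓ : ℓ ≠ 0}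
    (h : p.1.2 = Projectivization.mk ℂ ℓ hℓ) {i : Fin v} (hi : ℓ i = 1) :
    p.1.1 = p.1.1 i • ℓ := by
  have hmem : p.1.1 ∈ p.1.2.submodule := p.2
  rw [h, Projectivization.submodule_mk, Submodule.mem_span_singleton] at hmem
  obtain ⟨a, ha⟩ := hmem
  have hai : a = p.1.1 i := by simpa [hi] using congrFun ha i
  rw [← hai, ha]

theorem mk_smul_eq_mk {a : ℂ} {ℓ : Fin v → ℂ} (ha : a • ℓ ≠ 0) (hℓ : ℓ ≠ 0) :
    Projectivization.mk ℂ (a • ℓ) ha = Projectivization.mk ℂ ℓ hℓ :=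
  (Projectivization.mk_eq_mk_iff' ℂ _ _ ha hℓ).mpr ⟨a, rfl⟩

end Blowup

section

variable {v : ℕ} {U : Set ℂ} {ρ : ℂ → ℂ} {R : Set ℂ}

theorem BlExact.exists_local_factor {F : U → Blowup v} (hF : BlExact v U ρ R F) (z0 : U) :
    ∃ V : Set U, IsOpen V ∧ z0 ∈ V ∧ ∃ g : U → Fin v → ℂ, ContinuousOn g V ∧
      ∀ z ∈ V, ∃ hg : g z ≠ 0, F z = Blowup.ofFactor (ρ z) (g z) hg := by
  obtain ⟨-, hFE, hch⟩ := hF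
  obtain ⟨i, V, hVo, hz0V, ⟨ℓ, hℓc, hℓi, hℓmk⟩, ⟨gl, hglc, hglρ, hglR⟩⟩ := hch z0
  refine ⟨V, hVo, hz0V, fun z => gl z • ℓ z, hglc.smul hℓc, fun z hz => ?_⟩
  obtain ⟨hℓ0, hmk⟩ := hℓmk z hz
  have hfst : (F z).1.1 = ρ z • gl z • ℓ z := by
    rw [smul_smul, ← hglρ z hz]
    exact (F z).fst_eq_smul_of_snd_eq_mk hmk (hℓi z hz)
  have hgl0 : gl z ≠ 0 := by
    by_cases hzR : (z : ℂ) ∈ R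
    · exact hglR z hz hzR
    · intro hgl0
      exact hzR ((hFE z).mp (by simp [ExcDiv, hfst, hgl0]))
  have hg0 : gl z • ℓ z ≠ 0 := smul_ne_zero hgl0 hℓ0
  refine ⟨hg0, Subtype.ext (Prod.ext hfst ?_)⟩
  rw [hmk]
  exact (Blowup.mk_smul_eq_mk hg0 hℓ0).symm

theorem BlExact.exists_factor (hU : IsOpen U) (hρ : {z | ρ z = 0}.Finite)
    {F : U → Blowup v} (hF : BlExact v U ρ R F) :
    ∃ (ft : U → Fin v → ℂ) (hft : ∀ z, ft z ≠ 0), Continuous ft ∧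
      ∀ z, F z = Blowup.ofFactor (ρ z) (ft z) (hft z) := by
  have := hU.perfectSpace_subtype
  have hρU : {z : U | ρ z = 0}.Finite := hρ.preimage Subtype.val_injective.injOn
  choose V hVo hzV g hgc hgF using hF.exists_local_factor
  have hglue : ∀ z0, EqOn (fun z => g z z) (g z0) (V z0) := by
    intro z0 z hz
    refine eqOn_of_smul_eqOn_of_finite_zeros hρU ((hVo z).inter (hVo z0))
      ((hgc z).mono inter_subset_left) ((hgc z0).mono inter_subset_right)
      (fun y hy => ?_) ⟨hzV z, hz⟩
    obtain ⟨_, hy₁⟩ := hgF z y hy.1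
    obtain ⟨_, hy₂⟩ := hgF z0 y hy.2
    exact (congrArg (·.1.1) hy₁).symm.trans (congrArg (·.1.1) hy₂)
  refine ⟨fun z => g z z, fun z => (hgF z z (hzV z)).1,
    continuous_iff_continuousAt.mpr fun z0 => ?_, fun z => (hgF z z (hzV z)).2⟩
  have hV : V z0 ∈ 𝓝 z0 := (hVo z0).mem_nhds (hzV z0)
  exact ((hgc z0).continuousAt hV).congr (eventuallyEq_of_mem hV (hglue z0).symm)

theorem BlExact.baseExact (hU : IsOpen U) (hρ : {z | ρ z = 0}.Finite)
    {F : U → Blowup v} (hF : BlExact v U ρ R F) :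
    BaseExact v U ρ R fun z => (F z).1.1 := by
  obtain ⟨ft, hft0, hftc, hFft⟩ := hF.exists_factor hU hρ
  refine ⟨(continuous_subtype_val.comp hF.1).fst, ⟨ft, hftc, fun z j => ?_,
    fun z _ => hft0 z⟩, hF.2.1⟩
  simp only [hFft z, Blowup.ofFactor_fst, Pi.smul_apply, smul_eq_mul]

theorem BlExact.eq_of_fst_eq (hU : IsOpen U) (hρ : {z | ρ z = 0}.Finite)
    {F G : U → Blowup v} (hF : BlExact v U ρ R F) (hG : BlExact v U ρ R G)
    (h : ∀ z, (F z).1.1 = (G z).1.1) : F = G := by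
  have := hU.perfectSpace_subtype
  have hρU : {z : U | ρ z = 0}.Finite := hρ.preimage Subtype.val_injective.injOn
  obtain ⟨ftF, _, hftFc, hFft⟩ := hF.exists_factor hU hρ
  obtain ⟨ftG, _, hftGc, hGft⟩ := hG.exists_factor hU hρ
  have hft : ftF = ftG := funext fun z =>
    eqOn_of_smul_eqOn_of_finite_zeros hρU isOpen_univ
      hftFc.continuousOn hftGc.continuousOn
      (fun y _ => by simpa only [hFft y, hGft y, Blowup.ofFactor_fst] using h y) (mem_univ z)
  subst hft
  funext z
  rw [hFft z, hGft z]

/-- The chart of the lift near `z0` is the one where `f̃ z0 i ≠ 0`. -/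
theorem BaseExact.exists_blExact {f : U → Fin v → ℂ} (hf : BaseExact v U ρ R f) :
    ∃ F : U → Blowup v, BlExact v U ρ R F ∧ (fun z => (F z).1.1) = f := by
  obtain ⟨hfc, ⟨ft, hftc, hft, hftR⟩, hf0⟩ := hf
  have hf_eq : ∀ z : U, ρ z • ft z = f z := fun z => funext fun j => (hft z j).symm
  have hft0 : ∀ z : U, ft z ≠ 0 := by
    intro z h0
    by_cases hzR : (z : ℂ) ∈ R
    · exact hftR z hzR h0
    · exact hzR ((hf0 z).mp (by rw [← hf_eq z, h0, smul_zero]))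
  refine ⟨fun z => Blowup.ofFactor (ρ z) (ft z) (hft0 z), ⟨?_, fun z => ?_, fun z0 => ?_⟩,
    funext hf_eq⟩
  · have hmk : Continuous fun z => Projectivization.mk ℂ (ft z) (hft0 z) :=
      continuous_quotient_mk'.comp (hftc.subtype_mk hft0)
    refine Continuous.subtype_mk (Continuous.prodMk ?_ hmk) _
    simpa only [hf_eq] using hfc
  · show ρ z • ft z = 0 ↔ _
    rw [hf_eq z]
    exact hf0 z
  obtain ⟨i, hi⟩ := Function.ne_iff.mp (hft0 z0)
  have hfti : Continuous fun z => ft z i := (continuous_apply i).comp hftc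
  refine ⟨i, {z | ft z i ≠ 0}, isOpen_compl_singleton.preimage hfti, hi,
    ⟨fun z => (ft z i)⁻¹ • ft z, (hfti.continuousOn.inv₀ fun _ hz => hz).smul
      hftc.continuousOn, fun z hz => inv_mul_cancel₀ hz, fun z hz => ?_⟩,
    ⟨fun z => ft z i, hfti.continuousOn, fun z _ => rfl, fun z hz _ => hz⟩⟩
  have hℓ0 := smul_ne_zero (inv_ne_zero hz) (hft0 z)
  exact ⟨hℓ0, (Blowup.mk_smul_eq_mk hℓ0 (hft0 z)).symm⟩

end

theorem stmt14 (hU : IsOpen U) (c : Multiset ℂ)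
    (hρ : ρ = fun z => (c.map fun a => z - a).prod) :
    Set.BijOn (fun (F : U → Blowup v) (z : U) => (F z).1.1)
      {F | BlExact v U ρ R F} {f | BaseExact v U ρ R f} := by
  have hρ0 : {z | ρ z = 0}.Finite := by
    refine c.toFinset.finite_toSet.subset fun z hz => ?_
    simp_all [Multiset.prod_eq_zero_iff, sub_eq_zero]
  refine ⟨fun F hF => hF.baseExact hU hρ0,
    fun F hF G hG h => hF.eq_of_fst_eq hU hρ0 hG (congrFun h), fun f hf => ?_⟩
  obtain ⟨F, hF, rfl⟩ := hf.exists_blExact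
  exact ⟨F, hF, rfl⟩

end
end

section
/- Let $Q_r = \{0, \ell_1, \dots, \ell_r, V\}$ with $0 < \ell_i < V$, the $\ell_i$ incomparable. For saturated elements $x$ of $\mathrm{Hilb}(C)^{Q_r}$ define $r(x) = \sum_c \mathrm{rank}(f_c)$ and $\kappa(x) = \gamma(x) - r(x)' $ as in the paper, where for a chain $f_c = m_0 \cdot 0 + m_\ell \cdot \ell_j$ one has $\mathrm{rank}(f_c) = 2m_0 + m_\ell$, $\gamma(f_c) = 2v\, m_0 + 2(v-1) m_\ell$ (with $v = \dim V \geq 3$), and $\kappa(f_c) = \gamma(f_c) - \mathrm{rank}(f_c) - [f_c \text{ nontrivial}]$. Then for every nontrivial chain $f$, $\mathrm{rank}(f) \leq \kappa(f)$; more generally if $x_1 \prec x_2$ are saturated elements then $\kappa(x_2) \geq \kappa(x_1) + 1$, and hence $r(x) \leq \kappa(x)$ for all $x$. -/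
/-! Chains of `Q_r = {0, ℓ_1, …, ℓ_r, V}` at a single point of the curve are encoded by
pairs `(m₀, m_ℓ) : ℕ × ℕ` (the multiplicities of `0` and of the unique `ℓ_j` occurring).
Elements of `Hilb(C)^{Q_r}` supported at finitely many points are encoded as multisets
of such pairs (the nontrivial local chains). -/

/-- The rank of a chain `m₀·0 + m_ℓ·ℓ_j` : `2 m₀ + m_ℓ`. -/
def rankC (f : ℕ × ℕ) : ℤ := 2 * (f.1 : ℤ) + (f.2 : ℤ)

/-- The expected codimension `γ` of a chain: `2v·m₀ + 2(v-1)·m_ℓ`. -/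
def gammaC (v : ℕ) (f : ℕ × ℕ) : ℤ := 2 * (v : ℤ) * (f.1 : ℤ) + 2 * ((v : ℤ) - 1) * (f.2 : ℤ)

/-- `κ(f) = γ(f) - rank(f) - [f nontrivial]`. -/
def kappaC (v : ℕ) (f : ℕ × ℕ) : ℤ :=
  gammaC v f - rankC f - (if f ≠ (0, 0) then 1 else 0)

/-- The rank of a saturated element: sum of ranks of its local chains. -/
def rankM (x : Multiset (ℕ × ℕ)) : ℤ := (x.map rankC).sum

/-- `κ` of a saturated element: sum of `κ` of its local chains. -/
def kappaM (v : ℕ) (x : Multiset (ℕ × ℕ)) : ℤ := (x.map (kappaC v)).sum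

/-- The covering relation `x₁ ≺ x₂` between saturated elements of `Hilb(C)^{Q_r}`:
at a single point, either increase `m_ℓ` by 1, trade `m_ℓ → m_ℓ - 1, m₀ → m₀ + 1`,
increase `m₀` by 1, or create a new support point with chain `ℓ_i`, or (if `r ≥ 2`)
with chain `0`. -/
def StepRel (r : ℕ) (x y : Multiset (ℕ × ℕ)) : Prop :=
  (∃ (s : Multiset (ℕ × ℕ)) (m0 ml : ℕ), (m0, ml) ≠ (0, 0) ∧ x = (m0, ml) ::ₘ s ∧
      (y = (m0, ml + 1) ::ₘ s ∨ (1 ≤ ml ∧ y = (m0 + 1, ml - 1) ::ₘ s) ∨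
        y = (m0 + 1, ml) ::ₘ s)) ∨
    y = (0, 1) ::ₘ x ∨ (2 ≤ r ∧ y = (1, 0) ::ₘ x)

/-- For `v = dim V ≥ 3`: every nontrivial chain satisfies `rank f ≤ κ(f)`; each covering
relation increases `κ` by at least `1`; and hence `r(x) ≤ κ(x)` for all saturated `x`. -/
theorem stmt18 (v r : ℕ) (hv : 3 ≤ v) (hr : 1 ≤ r) :
    (∀ f : ℕ × ℕ, f ≠ (0, 0) → rankC f ≤ kappaC v f) ∧
      (∀ x y : Multiset (ℕ × ℕ), StepRel r x y → kappaM v x + 1 ≤ kappaM v y) ∧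
      (∀ x : Multiset (ℕ × ℕ), rankM x ≤ kappaM v x) := by

  have hv' : (3:ℤ) ≤ (v:ℤ) := by exact_mod_cast hv
  have key : ∀ f : ℕ × ℕ, rankC f ≤ kappaC v f := by
    rintro ⟨a, b⟩
    by_cases h : ((a, b) : ℕ × ℕ) = (0, 0)
    · rcases Prod.mk.injEq .. ▸ h with ⟨ha, hb⟩
      subst ha; subst hb
      simp [rankC, kappaC, gammaC]
    · have hab : 1 ≤ a + b := by
        rcases Nat.eq_zero_or_pos (a + b) with h0 | h0
        · exact absurd (by simp [Nat.eq_zero_of_add_eq_zero_right h0,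
            Nat.eq_zero_of_add_eq_zero_left h0]) h
        · exact h0
      have hab' : (1:ℤ) ≤ (a:ℤ) + (b:ℤ) := by exact_mod_cast hab
      simp only [kappaC, gammaC, rankC, h, ne_eq, not_false_eq_true, if_pos]
      nlinarith [Nat.cast_nonneg (α := ℤ) a, Nat.cast_nonneg (α := ℤ) b]
  refine ⟨fun f _ => key f, ?_, ?_⟩
  · intro x y hstep
    have hnt : ∀ m0 ml : ℕ, ((m0, ml) : ℕ × ℕ) ≠ (0, 0) →
        (if ((m0, ml) : ℕ × ℕ) ≠ (0, 0) then (1:ℤ) else 0) = 1 := by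
      intro m0 ml h; rw [if_pos h]
    rcases hstep with ⟨s, m0, ml, hne, hx, hy⟩ | hy | ⟨_, hy⟩
    · rcases hy with hy | ⟨hml, hy⟩ | hy
      · subst hx; subst hy
        simp only [kappaM, Multiset.map_cons, Multiset.sum_cons]
        have h1 : ((m0, ml + 1) : ℕ × ℕ) ≠ (0, 0) := by simp
        rw [kappaC, kappaC, gammaC, gammaC, rankC, rankC, hnt _ _ hne, hnt _ _ h1]
        push_cast
        nlinarith
      · subst hx; subst hy
        obtain ⟨ml', rfl⟩ : ∃ ml', ml = ml' + 1 := ⟨ml - 1, by omega⟩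
        simp only [kappaM, Multiset.map_cons, Multiset.sum_cons, Nat.add_sub_cancel]
        have h1 : ((m0 + 1, ml') : ℕ × ℕ) ≠ (0, 0) := by simp
        rw [kappaC, kappaC, gammaC, gammaC, rankC, rankC, hnt _ _ hne, hnt _ _ h1]
        push_cast
        nlinarith
      · subst hx; subst hy
        simp only [kappaM, Multiset.map_cons, Multiset.sum_cons]
        have h1 : ((m0 + 1, ml) : ℕ × ℕ) ≠ (0, 0) := by simp
        rw [kappaC, kappaC, gammaC, gammaC, rankC, rankC, hnt _ _ hne, hnt _ _ h1]
        push_cast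
        nlinarith
    · subst hy
      simp only [kappaM, Multiset.map_cons, Multiset.sum_cons]
      have h1 : ((0, 1) : ℕ × ℕ) ≠ (0, 0) := by simp
      rw [kappaC, gammaC, rankC, hnt _ _ h1]
      push_cast
      nlinarith
    · subst hy
      simp only [kappaM, Multiset.map_cons, Multiset.sum_cons]
      have h1 : ((1, 0) : ℕ × ℕ) ≠ (0, 0) := by simp
      rw [kappaC, gammaC, rankC, hnt _ _ h1]
      push_cast
      nlinarith
  · intro x
    induction x using Multiset.induction with
    | empty => simp [rankM, kappaM]
    | cons f s ih =>
      simp only [rankM, kappaM, Multiset.map_cons, Multiset.sum_cons] at *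
      exact add_le_add (key f) ih
end
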